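/- If the dimension function # assigns dimensions to expressions of a first-order expression language (variables and constants get dimension 1; a bundle of n subexpressions each of dimension ⊑ 1 gets dimension n; a conditional gets the join of its branch dimensions when the join is strictly below ⊤, and ⊤ otherwise; any expression containing an ill-dimensioned part or violating side conditions gets ⊤), then any expression containing an inconsistently-dimensioned (dimension-⊤) subexpression is itself inconsistently-dimensioned: for all one-hole contexts C and expressions e, #(e) = ⊤ implies #(C[e]) = ⊤. -/

import Mathlib

inductive Flat where
  | bot
  | lift (n : ℕ)
  | top
deriving DecidableEq

namespace Flat

/-- The flat order: reflexive closure of `⊥ ⊑ lift n` and `lift n ⊑ ⊤`. -/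
def le : Flat → Flat → Prop
  | .bot, _ => True
  | _, .top => True
  | .lift m, .lift n => m = n
  | _, _ => False

/-- Join in the flat lattice. -/
def sup : Flat → Flat → Flat
  | .bot, x => x
  | x, .bot => x
  | .top, _ => .top
  | _, .top => .top
  | .lift m, .lift n => if m = n then .lift m else .top

/-- Meet in the flat lattice. -/
def inf : Flat → Flat → Flat
  | .top, x => x
  | x, .top => x
  | .bot, _ => .bot
  | _, .bot => .bot
  | .lift m, .lift n => if m = n then .lift m else .bot

end Flat
/-- `leb d (lift 1)` etc.: boolean version of the flat order. -/
def Flat.leb : Flat → Flat → Bool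
  | .bot, _ => true
  | _, .top => true
  | .lift m, .lift n => m == n
  | _, _ => false

/-- `d ⊑ lift m` for some `m ≥ n`. -/
def Flat.atLeast (d : Flat) (n : ℕ) : Bool :=
  match d with
  | .bot => true
  | .lift m => decide (n ≤ m)
  | .top => false

/-- epsilon0 expressions (handles omitted: they are immaterial for dimensions). -/
inductive Expr where
  | var (x : ℕ)
  | const (c : ℤ)
  | bundle (items : List Expr)
  | letE (vars : List ℕ) (bound : Expr) (body : Expr)
  | call (f : ℕ) (args : List Expr)
  | prim (p : ℕ) (args : List Expr)
  | ifE (disc : Expr) (cases : List ℤ) (thenB : Expr) (elseB : Expr)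
  | fork (f : ℕ) (args : List Expr)
  | joinE (e : Expr)

/-- In- and out-dimensions of procedures and primitives. -/
structure Env where
  procOut : ℕ → Flat
  procArity : ℕ → ℕ
  primOut : ℕ → ℕ
  primArity : ℕ → ℕ

/-- The (total extension of the) dimension function `#`. -/
def dim (Γ : Env) : Expr → Flat
  | .var _ => .lift 1
  | .const _ => .lift 1
  | .bundle items =>
      if items.attach.all (fun ⟨e, _⟩ => Flat.leb (dim Γ e) (.lift 1)) then
        .lift items.length
      else .top
  | .letE vars bound body =>
      if Flat.atLeast (dim Γ bound) vars.length ∧ dim Γ body ≠ .top then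
        dim Γ body
      else .top
  | .call f args =>
      if args.length = Γ.procArity f ∧
         (args.attach.all fun ⟨e, _⟩ => Flat.leb (dim Γ e) (.lift 1)) ∧
         Γ.procOut f ≠ .top then
        Γ.procOut f
      else .top
  | .prim p args =>
      if args.length = Γ.primArity p ∧
         (args.attach.all fun ⟨e, _⟩ => Flat.leb (dim Γ e) (.lift 1)) then
        .lift (Γ.primOut p)
      else .top
  | .ifE d _ t e =>
      if Flat.leb (dim Γ d) (.lift 1) ∧ Flat.sup (dim Γ t) (dim Γ e) ≠ .top then
        Flat.sup (dim Γ t) (dim Γ e)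
      else .top
  | .fork f args =>
      if args.length = Γ.procArity f ∧
         (args.attach.all fun ⟨e, _⟩ => Flat.leb (dim Γ e) (.lift 1)) ∧
         Flat.leb (Γ.procOut f) (.lift 1) then
        .lift 1
      else .top
  | .joinE e =>
      if Flat.leb (dim Γ e) (.lift 1) then .lift 1 else .top
/-- One-hole expression contexts. -/
inductive Ctx where
  | hole
  | bundle (pre : List Expr) (c : Ctx) (post : List Expr)
  | letBound (vars : List ℕ) (c : Ctx) (body : Expr)
  | letBody (vars : List ℕ) (bound : Expr) (c : Ctx)
  | call (f : ℕ) (pre : List Expr) (c : Ctx) (post : List Expr)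
  | prim (p : ℕ) (pre : List Expr) (c : Ctx) (post : List Expr)
  | ifDisc (c : Ctx) (cases : List ℤ) (t e : Expr)
  | ifThen (d : Expr) (cases : List ℤ) (c : Ctx) (e : Expr)
  | ifElse (d : Expr) (cases : List ℤ) (t : Expr) (c : Ctx)
  | fork (f : ℕ) (pre : List Expr) (c : Ctx) (post : List Expr)
  | joinE (c : Ctx)

/-- Filling the hole of a context with an expression. -/
def Ctx.fill : Ctx → Expr → Expr
  | .hole, e => e
  | .bundle pre c post, e => .bundle (pre ++ [c.fill e] ++ post)
  | .letBound vs c body, e => .letE vs (c.fill e) body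
  | .letBody vs b c, e => .letE vs b (c.fill e)
  | .call f pre c post, e => .call f (pre ++ [c.fill e] ++ post)
  | .prim p pre c post, e => .prim p (pre ++ [c.fill e] ++ post)
  | .ifDisc c cs t el, e => .ifE (c.fill e) cs t el
  | .ifThen d cs c el, e => .ifE d cs (c.fill e) el
  | .ifElse d cs t c, e => .ifE d cs t (c.fill e)
  | .fork f pre c post, e => .fork f (pre ++ [c.fill e] ++ post)
  | .joinE c, e => .joinE (c.fill e)

namespace Flat

@[simp] theorem top_sup (x : Flat) : sup .top x = .top := by cases x <;> rfl

@[simp] theorem sup_top (x : Flat) : sup x .top = .top := by cases x <;> rfl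

@[simp] theorem top_leb_lift (n : ℕ) : leb .top (.lift n) = false := rfl

@[simp] theorem atLeast_top (n : ℕ) : atLeast .top n = false := rfl

end Flat

/-- any expression containing an inconsistently-dimensioned
(dimension-⊤) subexpression is itself inconsistently-dimensioned. -/
theorem dim_top_propagates_outwards (Γ : Env) (C : Ctx) (e : Expr)
    (h : dim Γ e = .top) : dim Γ (C.fill e) = .top := by
  -- `⊤` is absorbing for `sup` and fails both `leb _ (lift 1)` and `atLeast`, so every rule of
  -- `dim` sends a `⊤` subexpression to `⊤`.
  induction C <;> simp_all [Ctx.fill, dim]
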